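/- Let w*(γ) ∈ ℝ^{n+1} be the unique minimizer of Σ_{i=1}^n (w_{i+1} − w_i)² subject to |w_i − ỹ_i| ≤ γ α̃_i, i ∈ [n+1], where α̃_1 = α̃_{n+1} = 0. Suppose on an interval [γ₁, γ₂] the sets F(γ) = {i : |w*(γ)_i − ỹ_i| < α̃_i γ} and B(γ) = [n+1] \ F(γ) are constant, and the boundary signs s_j ∈ {−1,+1} of the non-free points are constant. Then for every free point i, γ ↦ w*(γ)_i is affine on [γ₁, γ₂], given by w*_i(γ) = (ỹ_a f + ỹ_c f̄) + γ(α̃_a s_a f + α̃_c s_c f̄), where a, c are the nearest non-free indices below and above i, f = (c−i)/(c−a), f̄ = 1 − f. -/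
import Mathlib

private lemma spring_harmonic (n : ℕ) (yt αt : Fin (n + 2) → ℝ) (γ : ℝ)
    (W : Fin (n + 2) → ℝ)
    (hc : ∀ i, |W i - yt i| ≤ γ * αt i)
    (hmin : ∀ v : Fin (n + 2) → ℝ, (∀ i, |v i - yt i| ≤ γ * αt i) →
      (∑ i : Fin (n + 1), (W i.succ - W i.castSucc) ^ 2) ≤
        ∑ i : Fin (n + 1), (v i.succ - v i.castSucc) ^ 2)
    (k : ℕ) (hk0 : 0 < k) (hkl : k < n + 1)
    (hstrict : |W ⟨k, by omega⟩ - yt ⟨k, by omega⟩| < γ * αt ⟨k, by omega⟩) :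
    W ⟨k + 1, by omega⟩ + W ⟨k - 1, by omega⟩ = 2 * W ⟨k, by omega⟩ := by
  have hk1 : k - 1 < n + 1 := by omega
  set i₁ : Fin (n + 1) := ⟨k - 1, hk1⟩ with hi₁
  set i₂ : Fin (n + 1) := ⟨k, hkl⟩ with hi₂
  have hj : (⟨k, by omega⟩ : Fin (n + 2)) = i₂.castSucc := rfl
  have hp : (⟨k + 1, by omega⟩ : Fin (n + 2)) = i₂.succ := rfl
  have hm : (⟨k - 1, by omega⟩ : Fin (n + 2)) = i₁.castSucc := rfl
  rw [hj, hp, hm]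
  rw [hj] at hstrict
  set j : Fin (n + 2) := i₂.castSucc with hjdef
  by_contra hA
  set A : ℝ := 2 * W j - W i₂.succ - W i₁.castSucc with hAdef
  have hAne : A ≠ 0 := by
    intro h
    apply hA
    rw [hAdef] at h
    linarith
  have hApos : 0 < A ^ 2 := lt_of_le_of_ne (sq_nonneg A) (Ne.symm (pow_ne_zero 2 hAne))
  have hAabs : 0 < |A| := abs_pos.mpr hAne
  set δ : ℝ := γ * αt j - |W j - yt j| with hδdef
  have hδ : 0 < δ := by simp only [hδdef]; linarith [hstrict]
  set t : ℝ := min (δ / |A|) (1/2) with htdef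
  have ht0 : 0 < t := lt_min (div_pos hδ hAabs) (by norm_num)
  have ht1 : t < 1 := lt_of_le_of_lt (min_le_right _ _) (by norm_num)
  set ε : ℝ := -A * t with hεdef
  have hεle : |ε| ≤ δ := by
    rw [hεdef, abs_mul, abs_neg]
    calc |A| * |t| = |A| * t := by rw [abs_of_pos ht0]
    _ ≤ |A| * (δ / |A|) := by
        apply mul_le_mul_of_nonneg_left (min_le_left _ _) (le_of_lt hAabs)
    _ = δ := by field_simp
  set v : Fin (n + 2) → ℝ := Function.update W j (W j + ε) with hvdef
  have hvj : v j = W j + ε := Function.update_self j _ W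
  have hvne : ∀ x, x ≠ j → v x = W x := fun x hx => Function.update_of_ne hx _ W
  have hvc : ∀ i, |v i - yt i| ≤ γ * αt i := by
    intro x
    by_cases hx : x = j
    · rw [hx, hvj]
      calc |W j + ε - yt j| ≤ |W j - yt j| + |ε| := by
            have h : W j + ε - yt j = (W j - yt j) + ε := by ring
            rw [h]; exact abs_add_le _ _
      _ ≤ |W j - yt j| + δ := by linarith
      _ = γ * αt j := by rw [hδdef]; ring
    · rw [hvne x hx]; exact hc x
  have hne12 : i₁ ≠ i₂ := by
    simp only [hi₁, hi₂, Ne, Fin.mk.injEq]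
    omega
  have hi₁succ : i₁.succ = j := by
    simp only [hi₁, hjdef, hi₂, Fin.succ_mk, Fin.castSucc_mk, Fin.mk.injEq]
    omega
  have hi₁cast : (i₁.castSucc : Fin (n + 2)) ≠ j := by
    simp only [hi₁, hjdef, hi₂, Fin.castSucc_mk, Ne, Fin.mk.injEq]
    omega
  have hi₂succ : (i₂.succ : Fin (n + 2)) ≠ j := by
    simp only [hi₂, hjdef, Fin.succ_mk, Fin.castSucc_mk, Ne, Fin.mk.injEq]
    omega
  set g : Fin (n + 1) → ℝ :=
    fun i => (v i.succ - v i.castSucc) ^ 2 - (W i.succ - W i.castSucc) ^ 2 with hg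
  have hgzero : ∀ i : Fin (n + 1), i ∉ ({i₁, i₂} : Finset (Fin (n + 1))) → g i = 0 := by
    intro i hi
    simp only [Finset.mem_insert, Finset.mem_singleton, not_or] at hi
    have hsucc : (i.succ : Fin (n + 2)) ≠ j := by
      simp only [hjdef, hi₂, Ne, Fin.ext_iff, Fin.val_succ, Fin.castSucc_mk]
      intro h
      apply hi.1
      simp only [hi₁, Fin.ext_iff]
      omega
    have hcast : (i.castSucc : Fin (n + 2)) ≠ j := by
      simp only [hjdef, hi₂, Ne, Fin.ext_iff, Fin.coe_castSucc, Fin.castSucc_mk]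
      intro h
      apply hi.2
      simp only [hi₂, Fin.ext_iff]
      omega
    simp only [hg, hvne _ hsucc, hvne _ hcast, sub_self]
  have hsum : (∑ i : Fin (n + 1), g i) = g i₁ + g i₂ := by
    rw [← Finset.sum_subset (Finset.subset_univ ({i₁, i₂} : Finset (Fin (n + 1))))
      (fun x _ hx => hgzero x hx)]
    exact Finset.sum_pair hne12
  have hg1 : g i₁ = 2 * ε * (W j - W i₁.castSucc) + ε ^ 2 := by
    show (v i₁.succ - v i₁.castSucc) ^ 2 - (W i₁.succ - W i₁.castSucc) ^ 2 = _
    rw [hi₁succ, hvj, hvne _ hi₁cast]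
    ring
  have hg2 : g i₂ = -2 * ε * (W i₂.succ - W j) + ε ^ 2 := by
    show (v i₂.succ - v i₂.castSucc) ^ 2 - (W i₂.succ - W i₂.castSucc) ^ 2 = _
    rw [← hjdef, hvj, hvne _ hi₂succ]
    ring
  have hobj : (∑ i : Fin (n + 1), (v i.succ - v i.castSucc) ^ 2) =
      (∑ i : Fin (n + 1), (W i.succ - W i.castSucc) ^ 2) + (2 * ε * A + 2 * ε ^ 2) := by
    have hdiff : (∑ i : Fin (n + 1), (v i.succ - v i.castSucc) ^ 2) -
        (∑ i : Fin (n + 1), (W i.succ - W i.castSucc) ^ 2) = ∑ i : Fin (n + 1), g i := by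
      rw [← Finset.sum_sub_distrib]
    rw [hsum, hg1, hg2] at hdiff
    rw [hAdef]
    linarith
  have hle := hmin v hvc
  rw [hobj] at hle
  have hkey : 0 < A ^ 2 * t * (1 - t) :=
    mul_pos (mul_pos hApos ht0) (by linarith)
  have hcontr : 2 * ε * A + 2 * ε ^ 2 < 0 := by
    have : 2 * ε * A + 2 * ε ^ 2 = -2 * (A ^ 2 * t * (1 - t)) := by rw [hεdef]; ring
    rw [this]
    linarith
  linarith



/-- Between critical points, free coordinates of the spring problem move affinely:
if on `[γ₁, γ₂]` the set of free points and the boundary signs of the non-free points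
are constant, then for any free point `i` with nearest non-free neighbors `a < i < c`,
`w*_i(γ) = (ỹ_a f + ỹ_c f̄) + γ(α̃_a s_a f + α̃_c s_c f̄)` with `f = (c−i)/(c−a)`. -/
theorem free_points_affine_between_critical_points (n : ℕ)
    (yt αt : Fin (n + 2) → ℝ) (hαt : ∀ i, 0 ≤ αt i)
    (hαt0 : αt 0 = 0) (hαtlast : αt (Fin.last (n + 1)) = 0)
    (γ₁ γ₂ : ℝ) (hγ₁ : 0 ≤ γ₁) (hγ : γ₁ < γ₂)
    (w : ℝ → Fin (n + 2) → ℝ)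
    (hw : ∀ γ ∈ Set.Icc γ₁ γ₂,
      (∀ i, |w γ i - yt i| ≤ γ * αt i) ∧
      ∀ v : Fin (n + 2) → ℝ, (∀ i, |v i - yt i| ≤ γ * αt i) →
        (∑ i : Fin (n + 1), (w γ i.succ - w γ i.castSucc) ^ 2) ≤
          ∑ i : Fin (n + 1), (v i.succ - v i.castSucc) ^ 2)
    (F : Set (Fin (n + 2)))
    (hF : ∀ γ ∈ Set.Icc γ₁ γ₂, {i | |w γ i - yt i| < αt i * γ} = F)
    (s : Fin (n + 2) → ℝ)
    (hs : ∀ j ∉ F, (s j = 1 ∨ s j = -1) ∧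
      ∀ γ ∈ Set.Icc γ₁ γ₂, w γ j = yt j + s j * (αt j * γ)) :
    ∀ i ∈ F, ∀ a c : Fin (n + 2), a ∉ F → c ∉ F → a < i → i < c →
      (∀ j, a < j → j < c → j ∈ F) →
      ∀ γ ∈ Set.Icc γ₁ γ₂,
        w γ i = (yt a * (((c : ℝ) - i) / ((c : ℝ) - a)) +
            yt c * (1 - ((c : ℝ) - i) / ((c : ℝ) - a))) +
          γ * (αt a * s a * (((c : ℝ) - i) / ((c : ℝ) - a)) +
            αt c * s c * (1 - ((c : ℝ) - i) / ((c : ℝ) - a))) := by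
  
  intro i hi a c ha hc hai hic hmid γ hγmem
  obtain ⟨hcon, hmin⟩ := hw γ hγmem
  have hai' : (a : ℕ) < (i : ℕ) := hai
  have hic' : (i : ℕ) < (c : ℕ) := hic
  have hclt : (c : ℕ) < n + 2 := c.isLt
  have hfree : ∀ j : Fin (n + 2), (a : ℕ) < (j : ℕ) → (j : ℕ) < (c : ℕ) →
      |w γ j - yt j| < γ * αt j := by
    intro j h1 h2
    have hjF : j ∈ F := hmid j (by exact h1) (by exact h2)
    rw [← hF γ hγmem] at hjF
    simpa [mul_comm] using hjF
  have ha1lt : (a : ℕ) + 1 < n + 2 := by omega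
  set d₀ : ℝ := w γ ⟨(a : ℕ) + 1, ha1lt⟩ - w γ a with hd₀
  have key : ∀ k : ℕ, ∀ _h1 : (a : ℕ) ≤ k, ∀ _h2 : k ≤ (c : ℕ),
      w γ ⟨k, Nat.lt_of_le_of_lt _h2 hclt⟩ =
        w γ a + ((k : ℝ) - ((a : ℕ) : ℝ)) * d₀ := by
    intro k
    induction k using Nat.strong_induction_on with
    | _ k ih =>
      intro h1 h2
      rcases Nat.lt_or_ge k ((a : ℕ) + 2) with hk | hk
      · rcases Nat.eq_or_lt_of_le h1 with heq | hlt
        · have : (⟨k, by omega⟩ : Fin (n + 2)) = a := Fin.ext (by simp only [Fin.val_mk]; omega)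
          rw [this, ← heq]
          simp
        · have hk1 : k = (a : ℕ) + 1 := by omega
          have : (⟨k, by omega⟩ : Fin (n + 2)) = ⟨(a : ℕ) + 1, ha1lt⟩ :=
            Fin.ext (by simp only [Fin.val_mk]; omega)
          rw [this, hd₀, hk1]
          push_cast
          ring
      · -- k ≥ a + 2 : use harmonicity at k - 1
        have hstr : |w γ ⟨k - 1, by omega⟩ - yt ⟨k - 1, by omega⟩| <
            γ * αt ⟨k - 1, by omega⟩ :=
          hfree ⟨k - 1, by omega⟩ (by simp only [Fin.val_mk]; omega) (by simp only [Fin.val_mk]; omega)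
        have hh := spring_harmonic n yt αt γ (w γ) hcon hmin (k - 1)
          (by omega) (by omega) hstr
        have e1 : (⟨k - 1 + 1, by omega⟩ : Fin (n + 2)) = ⟨k, by omega⟩ :=
          Fin.ext (by simp only [Fin.val_mk]; omega)
        have e2 : (⟨k - 1 - 1, by omega⟩ : Fin (n + 2)) = ⟨k - 2, by omega⟩ :=
          Fin.ext (by simp only [Fin.val_mk]; omega)
        have he1 := congrArg (w γ) e1
        have he2 := congrArg (w γ) e2
        have ih1 := ih (k - 1) (by omega) (by omega) (by omega)
        have ih2 := ih (k - 2) (by omega) (by omega) (by omega)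
        have c1 : ((k - 1 : ℕ) : ℝ) = (k : ℝ) - 1 := by
          have h1k : (1 : ℕ) ≤ k := by omega
          push_cast [h1k]
          ring
        have c2 : ((k - 2 : ℕ) : ℝ) = (k : ℝ) - 2 := by
          have h2k : (2 : ℕ) ≤ k := by omega
          push_cast [h2k]
          ring
        linear_combination hh - he1 - he2 + 2 * ih1 - ih2 + 2 * d₀ * c1 - d₀ * c2
  have hwa : w γ a = yt a + s a * (αt a * γ) := (hs a ha).2 γ hγmem
  have hwc : w γ c = yt c + s c * (αt c * γ) := (hs c hc).2 γ hγmem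
  have hkc := key (c : ℕ) (by omega) le_rfl
  have hki := key (i : ℕ) (by omega) (by omega)
  have ec : (⟨(c : ℕ), by omega⟩ : Fin (n + 2)) = c := Fin.ext rfl
  have ei : (⟨(i : ℕ), by omega⟩ : Fin (n + 2)) = i := Fin.ext rfl
  rw [ec] at hkc
  rw [ei] at hki
  have hcane : ((c : ℕ) : ℝ) - ((a : ℕ) : ℝ) ≠ 0 := by
    have : ((a : ℕ) : ℝ) < ((c : ℕ) : ℝ) := by exact_mod_cast (by omega : (a:ℕ) < (c:ℕ))
    linarith
  have hd0val : d₀ = (w γ c - w γ a) / (((c : ℕ) : ℝ) - ((a : ℕ) : ℝ)) := by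
    field_simp
    linarith [hkc]
  rw [hki, hd0val, hwa, hwc]
  field_simp
  ring
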